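/- arXiv:2412.10090 — 7 statements merged into one kernel-verified Lean document; each statement's English description precedes it below -/
import Mathlib

section
/- For any graph G on vertex set [n] and any positive integer k, the dilated stable set polytope kP_G contains an interior lattice point if and only if the all-ones vector (1,...,1) is an interior point of kP_G. -/
open Finset

noncomputable section

/-- The dilation `kP` of a set `P ⊆ ℝ^ι`. -/
def dilate {ι : Type*} (k : ℕ) (P : Set (ι → ℝ)) : Set (ι → ℝ) :=
  (fun x => (k : ℝ) • x) '' P

/-- A point of `ℝ^ι` is a lattice point if all its coordinates are integers. -/
def IsLatticePt {ι : Type*} (x : ι → ℝ) : Prop := ∀ i, ∃ m : ℤ, x i = m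

/-- The codegree of a (full-dimensional lattice) polytope `P ⊆ ℝ^ι`: the smallest
positive integer `k` such that the interior of `kP` contains a lattice point. -/
def codeg {ι : Type*} (P : Set (ι → ℝ)) : ℕ :=
  sInf {k | 0 < k ∧ ∃ x, IsLatticePt x ∧ x ∈ interior (dilate k P)}

/-- The stable set polytope of a simple graph: the convex hull of the indicator
vectors of the stable (independent) sets of `G`. -/
def stablePolytope {V : Type*} (G : SimpleGraph V) : Set (V → ℝ) :=
  convexHull ℝ {x | ∃ S : Set V, (∀ u ∈ S, ∀ v ∈ S, ¬ G.Adj u v) ∧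
    x = S.indicator (fun _ => (1 : ℝ))}

/-! The stable set polytope is anti-blocking: it lies in the nonnegative orthant and is closed under
decreasing coordinates, and so are its dilates. An interior point of an anti-blocking set has
positive coordinates, so an interior lattice point `x` satisfies `1 ≤ x`; and every positive point
below an interior point is again interior, so `1` is interior. Conversely `1` is a lattice point. -/

structure IsAntiblocking {ι : Type*} (K : Set (ι → ℝ)) : Prop where
  subset_Ici : K ⊆ Set.Ici 0
  mem_of_le : ∀ ⦃y⦄, y ∈ K → ∀ ⦃z⦄, 0 ≤ z → z ≤ y → z ∈ K

namespace IsAntiblocking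

variable {ι : Type*} {K : Set (ι → ℝ)}

theorem image_smul (hK : IsAntiblocking K) {c : ℝ} (hc : 0 ≤ c) :
    IsAntiblocking ((c • ·) '' K) where
  subset_Ici := by
    rintro _ ⟨p, hp, rfl⟩
    exact smul_nonneg hc (Set.mem_Ici.1 (hK.subset_Ici hp))
  mem_of_le := by
    rintro _ ⟨p, hp, rfl⟩ z hz0 hzp
    rcases hc.eq_or_lt with rfl | hc
    · exact ⟨p, hp, by simpa using (le_antisymm (by simpa using hzp) hz0).symm⟩
    · refine ⟨c⁻¹ • z, hK.mem_of_le hp (smul_nonneg (inv_nonneg.2 hc.le) hz0)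
        ((inv_smul_le_iff_of_pos hc).2 hzp), ?_⟩
      exact smul_inv_smul₀ hc.ne' z

theorem dilate (hK : IsAntiblocking K) (k : ℕ) : IsAntiblocking (dilate k K) :=
  hK.image_smul k.cast_nonneg

theorem pos_of_mem_interior [Finite ι] (hK : IsAntiblocking K) {x : ι → ℝ}
    (hx : x ∈ interior K) (i : ι) : 0 < x i := by
  have := interior_mono hK.subset_Ici hx
  rw [← Set.pi_univ_Ici, interior_pi_set Set.finite_univ] at this
  simpa using this i (Set.mem_univ i)

/-- Translating a small ball around `x` down to `y` keeps it in `K`, as long as it stays in the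
open orthant. -/
theorem mem_interior_of_le [Finite ι] (hK : IsAntiblocking K) {x y : ι → ℝ}
    (hx : x ∈ interior K) (hy : ∀ i, 0 < y i) (hyx : y ≤ x) : y ∈ interior K := by
  let U := (Set.univ.pi fun _ => Set.Ioi 0) ∩ (· + (x - y)) ⁻¹' interior K
  have hU : IsOpen U := (isOpen_set_pi Set.finite_univ fun _ _ => isOpen_Ioi).inter
    (isOpen_interior.preimage (continuous_add_const _))
  have hyU : y ∈ U := ⟨fun i _ => hy i, by simpa using hx⟩
  refine interior_maximal (fun z hzU => ?_) hU hyU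
  obtain ⟨hz, hzx⟩ := hzU
  refine hK.mem_of_le (interior_subset hzx) (fun i => (hz i (Set.mem_univ i)).le) ?_
  simpa using sub_nonneg.2 hyx

end IsAntiblocking

section IndicatorHull

variable {V : Type*}

def indicatorHull (𝒮 : Set (Set V)) : Set (V → ℝ) :=
  convexHull ℝ ((fun S => S.indicator fun _ => 1) '' 𝒮)

variable {𝒮 : Set (Set V)}

theorem indicatorHull_subset_Ici : indicatorHull 𝒮 ⊆ Set.Ici 0 :=
  convexHull_min (by rintro _ ⟨S, -, rfl⟩; exact Set.indicator_nonneg fun _ _ => zero_le_one)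
    (convex_Ici 0)

/-- Scaling coordinate `a` by `c ∈ [0, 1]` sends `1_S` to `c • 1_S + (1 - c) • 1_{S \ {a}}`. -/
theorem update_one_mul_mem_indicatorHull [DecidableEq V] (h𝒮 : IsLowerSet 𝒮) (a : V) {c : ℝ}
    (hc0 : 0 ≤ c) (hc1 : c ≤ 1) {x : V → ℝ} (hx : x ∈ indicatorHull 𝒮) :
    Function.update (1 : V → ℝ) a c * x ∈ indicatorHull 𝒮 := by
  let L := LinearMap.mulLeft ℝ (Function.update (1 : V → ℝ) a c)
  suffices L '' indicatorHull 𝒮 ⊆ indicatorHull 𝒮 from this ⟨x, hx, rfl⟩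
  rw [indicatorHull, LinearMap.image_convexHull]
  refine convexHull_min ?_ (convex_convexHull ℝ _)
  rintro _ ⟨_, ⟨S, hS, rfl⟩, rfl⟩
  have hSa : S \ {a} ∈ 𝒮 := h𝒮 Set.sdiff_subset hS
  have key : L (S.indicator fun _ => 1) =
      c • (S.indicator fun _ => 1) + (1 - c) • ((S \ {a}).indicator fun _ => 1) := by
    funext i
    by_cases hi : i = a <;> by_cases hiS : i ∈ S <;> simp [L, hi, hiS]
  rw [key]
  exact convex_convexHull ℝ _ (subset_convexHull ℝ _ (Set.mem_image_of_mem _ hS))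
    (subset_convexHull ℝ _ (Set.mem_image_of_mem _ hSa)) hc0 (sub_nonneg.2 hc1)
    (add_sub_cancel c 1)

theorem mul_mem_indicatorHull [Finite V] (h𝒮 : IsLowerSet 𝒮) {t x : V → ℝ} (ht0 : 0 ≤ t)
    (ht1 : t ≤ 1) (hx : x ∈ indicatorHull 𝒮) : t * x ∈ indicatorHull 𝒮 := by
  classical
  have := Fintype.ofFinite V
  suffices ∀ T : Finset V, ∀ t : V → ℝ, 0 ≤ t → t ≤ 1 → (∀ i ∉ T, t i = 1) →
      t * x ∈ indicatorHull 𝒮 from this Finset.univ t ht0 ht1 (by simp)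
  intro T
  induction T using Finset.induction_on with
  | empty =>
    intro t _ _ ht
    rwa [show t = 1 from funext fun i => ht i (Finset.notMem_empty i), one_mul]
  | insert a T haT ih =>
    intro t ht0 ht1 ht
    have hsplit : t * x = Function.update (1 : V → ℝ) a (t a) * (Function.update t a 1 * x) := by
      funext i
      by_cases hi : i = a <;> simp [hi]
    rw [hsplit]
    refine update_one_mul_mem_indicatorHull h𝒮 a (ht0 a) (ht1 a) (ih _ ?_ ?_ ?_)
    · exact le_update_iff.2 ⟨zero_le_one, fun j _ => ht0 j⟩
    · exact update_le_iff.2 ⟨le_rfl, fun j _ => ht1 j⟩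
    · intro i hiT; by_cases hi : i = a <;> simp_all

theorem isAntiblocking_indicatorHull [Finite V] (h𝒮 : IsLowerSet 𝒮) :
    IsAntiblocking (indicatorHull 𝒮) where
  subset_Ici := indicatorHull_subset_Ici
  mem_of_le := by
    intro y hy z hz0 hzy
    -- `z = (z / y) * y`, with the junk value `z i / 0 = 0` harmless because then `z i = 0`
    have hz : z = z / y * y := funext fun i => (div_mul_cancel_of_imp fun h =>
      le_antisymm (h ▸ hzy i) (hz0 i)).symm
    rw [hz]
    have hy0 := indicatorHull_subset_Ici hy
    exact mul_mem_indicatorHull h𝒮 (fun i => div_nonneg (hz0 i) (hy0 i))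
      (fun i => div_le_one_of_le₀ (hzy i) (hy0 i)) hy

end IndicatorHull

theorem stablePolytope_eq_indicatorHull {V : Type*} (G : SimpleGraph V) :
    stablePolytope G = indicatorHull {S | ∀ u ∈ S, ∀ v ∈ S, ¬ G.Adj u v} := by
  simp only [stablePolytope, indicatorHull]
  congr 1
  ext x
  simp [eq_comm]

theorem isAntiblocking_stablePolytope {V : Type*} [Finite V] (G : SimpleGraph V) :
    IsAntiblocking (stablePolytope G) := by
  rw [stablePolytope_eq_indicatorHull]
  exact isAntiblocking_indicatorHull fun _ _ hTS hS u hu v hv => hS u (hTS hu) v (hTS hv)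

theorem IsLatticePt.one_le_of_pos {ι : Type*} {x : ι → ℝ} (hx : IsLatticePt x)
    (hpos : ∀ i, 0 < x i) (i : ι) : 1 ≤ x i := by
  obtain ⟨m, hm⟩ := hx i
  have := hpos i
  rw [hm] at this ⊢
  exact_mod_cast (show (0 : ℤ) < m by exact_mod_cast this)

theorem stmt0_general {n : ℕ} (G : SimpleGraph (Fin n)) (k : ℕ) :
    (∃ x : Fin n → ℝ, IsLatticePt x ∧ x ∈ interior (dilate k (stablePolytope G))) ↔
      (fun _ => (1 : ℝ)) ∈ interior (dilate k (stablePolytope G)) := by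
  have hP := (isAntiblocking_stablePolytope G).dilate k
  constructor
  · rintro ⟨x, hx, hxP⟩
    exact hP.mem_interior_of_le hxP (fun _ => one_pos)
      (hx.one_le_of_pos (hP.pos_of_mem_interior hxP))
  · exact fun h => ⟨_, fun _ => ⟨1, Int.cast_one.symm⟩, h⟩

/-- For any graph `G` on `[n]` and positive integer `k`, `k·P_G` contains an interior
lattice point iff the all-ones vector is an interior point of `k·P_G`. -/
theorem stmt0 {n : ℕ} (G : SimpleGraph (Fin n)) (k : ℕ) (hk : 0 < k) :
    (∃ x : Fin n → ℝ, IsLatticePt x ∧ x ∈ interior (dilate k (stablePolytope G))) ↔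
      (fun _ => (1 : ℝ)) ∈ interior (dilate k (stablePolytope G)) :=
  stmt0_general G k
end
end

section
/- The codegree of the stable set polytope P_G equals the smallest positive integer k such that the all-ones vector lies in the interior of kP_G. -/
open Finset

noncomputable section

section Aux

variable {n : ℕ} {G : SimpleGraph (Fin n)}

/-- The linear map zeroing out coordinate `a`. -/
def zeroAt (a : Fin n) : (Fin n → ℝ) →ₗ[ℝ] (Fin n → ℝ) where
  toFun x := fun i => if i = a then 0 else x i
  map_add' x y := by funext i; by_cases h : i = a <;> simp [h]
  map_smul' c x := by funext i; by_cases h : i = a <;> simp [h, mul_ite]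

lemma zeroAt_mem (a : Fin n) {p : Fin n → ℝ} (hp : p ∈ stablePolytope G) :
    zeroAt a p ∈ stablePolytope G := by
  have himg : zeroAt a '' stablePolytope G ⊆ stablePolytope G := by
    rw [stablePolytope, (zeroAt a).image_convexHull]
    apply convexHull_mono
    rintro _ ⟨x, ⟨S, hS, rfl⟩, rfl⟩
    refine ⟨S \ {a}, fun u hu v hv => hS u hu.1 v hv.1, ?_⟩
    funext i
    by_cases h : i = a
    · simp [zeroAt, h, Set.indicator]
    · by_cases hi : i ∈ S <;>
        simp [zeroAt, h, Set.indicator_apply, hi, Set.mem_diff]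
  exact himg ⟨p, hp, rfl⟩

lemma update_mem (a : Fin n) {p : Fin n → ℝ} (hp : p ∈ stablePolytope G)
    {t : ℝ} (ht0 : 0 ≤ t) (htp : t ≤ p a) :
    Function.update p a t ∈ stablePolytope G := by
  rcases eq_or_lt_of_le (ht0.trans htp) with h0 | h0
  · have ht : t = 0 := le_antisymm (htp.trans h0.symm.le) ht0
    have : Function.update p a t = zeroAt a p := by
      funext i
      by_cases h : i = a <;> simp [zeroAt, Function.update, h, ht]
    rw [this]; exact zeroAt_mem a hp
  · have hc : Convex ℝ (stablePolytope G) := convex_convexHull ℝ _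
    have h1 : (0:ℝ) ≤ t / p a := div_nonneg ht0 h0.le
    have h2 : (0:ℝ) ≤ 1 - t / p a := by
      have : t / p a ≤ 1 := (div_le_one h0).2 htp
      linarith
    have := hc hp (zeroAt_mem a hp) h1 h2 (by ring)
    have heq : (t / p a) • p + (1 - t / p a) • zeroAt a p = Function.update p a t := by
      funext i
      by_cases h : i = a
      · simp only [zeroAt, Pi.add_apply, Pi.smul_apply, smul_eq_mul, LinearMap.coe_mk,
          AddHom.coe_mk, Function.update, h, if_pos rfl]
        subst h
        field_simp
        simp only [↓reduceIte, ↓reduceDIte]; ring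
      · simp only [zeroAt, Pi.add_apply, Pi.smul_apply, smul_eq_mul, LinearMap.coe_mk,
          AddHom.coe_mk, Function.update, h, if_neg h]
        simp only [eq_self_iff_true, if_false, dite_false, ite_false]
        ring
    rwa [heq] at this

/-- The stable set polytope is down-closed. -/
lemma downclosed {p q : Fin n → ℝ} (hp : p ∈ stablePolytope G)
    (hq0 : ∀ i, 0 ≤ q i) (hqp : ∀ i, q i ≤ p i) : q ∈ stablePolytope G := by
  have key : ∀ s : Finset (Fin n),
      (fun i => if i ∈ s then q i else p i) ∈ stablePolytope G := by
    intro s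
    induction s using Finset.induction with
    | empty => simpa using hp
    | @insert a s ha ih =>
        have := update_mem a ih (hq0 a) (by simpa [ha] using hqp a)
        have heq : Function.update (fun i => if i ∈ s then q i else p i) a (q a)
            = fun i => if i ∈ insert a s then q i else p i := by
          funext i
          by_cases h : i = a
          · simp [Function.update, h]
          · simp [Function.update, h, Finset.mem_insert]
        rwa [heq] at this
  have := key Finset.univ
  simpa using this

lemma nonneg_of_mem {p : Fin n → ℝ} (hp : p ∈ stablePolytope G) : ∀ i, 0 ≤ p i := by
  have : stablePolytope G ⊆ Set.pi Set.univ (fun _ : Fin n => Set.Ici (0:ℝ)) := by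
    rw [stablePolytope]
    apply convexHull_min
    · rintro _ ⟨S, _, rfl⟩ i _
      simp only [Set.mem_Ici]
      exact Set.indicator_nonneg (fun _ _ => zero_le_one) i
    · exact convex_pi fun i _ => convex_Ici 0
  intro i
  exact this hp i (Set.mem_univ i)

end Aux

/-- The codegree of `P_G` equals the smallest positive `k` such that the all-ones
vector lies in the interior of `k·P_G`. -/
theorem stmt1 {n : ℕ} (G : SimpleGraph (Fin n)) :
    codeg (stablePolytope G) =
      sInf {k : ℕ | 0 < k ∧ (fun _ => (1 : ℝ)) ∈ interior (dilate k (stablePolytope G))} := by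
  unfold codeg
  congr 1
  ext k
  simp only [Set.mem_setOf_eq]
  constructor
  · rintro ⟨hk, x, hx, hxint⟩
    refine ⟨hk, ?_⟩
    -- x has positive coords, hence ≥ 1
    have hsub : dilate k (stablePolytope G) ⊆ Set.pi Set.univ (fun _ : Fin n => Set.Ici (0:ℝ)) := by
      rintro _ ⟨p, hp, rfl⟩ i _
      simp only [Set.mem_Ici, Pi.smul_apply, smul_eq_mul]
      exact mul_nonneg (Nat.cast_nonneg k) (nonneg_of_mem hp i)
    have hxpos : ∀ i, 0 < x i := by
      have h1 : interior (dilate k (stablePolytope G)) ⊆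
          interior (Set.pi Set.univ (fun _ : Fin n => Set.Ici (0:ℝ))) := interior_mono hsub
      have h2 := h1 hxint
      rw [interior_pi_set Set.finite_univ] at h2
      intro i
      have := h2 i (Set.mem_univ i)
      simpa using this
    have hx1 : ∀ i, (1:ℝ) ≤ x i := by
      intro i
      obtain ⟨m, hm⟩ := hx i
      have : (0:ℝ) < m := hm ▸ hxpos i
      have : (1:ℤ) ≤ m := by exact_mod_cast this
      rw [hm]; exact_mod_cast this
    -- down-closedness of the dilate
    have hdown : ∀ x' ∈ dilate k (stablePolytope G), ∀ y : Fin n → ℝ,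
        (∀ i, 0 ≤ y i) → (∀ i, y i ≤ x' i) → y ∈ dilate k (stablePolytope G) := by
      rintro _ ⟨p, hp, rfl⟩ y hy0 hyx
      have hkpos : (0:ℝ) < k := by exact_mod_cast hk
      refine ⟨(k:ℝ)⁻¹ • y, ?_, ?_⟩
      · refine downclosed hp (fun i => ?_) (fun i => ?_)
        · exact mul_nonneg (inv_nonneg.2 hkpos.le) (hy0 i)
        · have := hyx i
          simp only [Pi.smul_apply, smul_eq_mul] at this ⊢
          rw [inv_mul_le_iff₀ hkpos]
          linarith [this]
      · simp [smul_smul, mul_inv_cancel₀ hkpos.ne']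
    -- get a ball around x
    rw [mem_interior_iff_mem_nhds, Metric.mem_nhds_iff] at hxint
    obtain ⟨ε, hε, hball⟩ := hxint
    rw [mem_interior_iff_mem_nhds, Metric.mem_nhds_iff]
    refine ⟨min ε 1, by positivity, ?_⟩
    intro y hy
    rw [Metric.mem_ball] at hy
    have hyc : ∀ i, |y i - 1| < min ε 1 := by
      intro i
      calc |y i - 1| = dist (y i) ((fun _ => (1:ℝ)) i) := by rw [Real.dist_eq]
        _ ≤ dist y (fun _ => (1:ℝ)) := dist_le_pi_dist y ((fun _ => (1:ℝ)) : Fin n → ℝ) i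
        _ < min ε 1 := hy
    have hx' : x + y - (fun _ => (1:ℝ)) ∈ dilate k (stablePolytope G) := by
      apply hball
      rw [Metric.mem_ball, dist_pi_lt_iff hε]
      intro i
      simp only [Pi.add_apply, Pi.sub_apply, Real.dist_eq]
      calc |x i + y i - 1 - x i| = |y i - 1| := by ring_nf
        _ < min ε 1 := hyc i
        _ ≤ ε := min_le_left _ _
    refine hdown _ hx' y (fun i => ?_) (fun i => ?_)
    · have := (abs_lt.1 (hyc i)).1
      have h1 : (-(min ε 1) : ℝ) ≥ -1 := by simp [min_le_right]
      nlinarith [min_le_right ε 1]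
    · have := hx1 i
      simp only [Pi.add_apply, Pi.sub_apply]
      linarith
  · rintro ⟨hk, h1⟩
    exact ⟨hk, fun _ => 1, fun i => ⟨1, by norm_num⟩, h1⟩
end
end

section
/- For every finite simple graph G, the codegree of the stable set polytope satisfies codeg(P_G) ≤ χ(G) + 1, where χ(G) is the chromatic number of G. -/
open Finset

noncomputable section

/-! A proper colouring with `k` colours splits the vertices into `k` stable sets, so `𝟙/k`
is the barycentre of their indicator vectors and lies in `P_G`. The polytope also contains the
corner simplex `{y ≥ 0, ∑ y ≤ 1}`, whose interior contains `δ𝟙` for small `δ > 0`. The point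
`𝟙/(k+1)` lies strictly between `δ𝟙` and `𝟙/k`, hence in the interior of `P_G`, so the
lattice point `𝟙` lies in the interior of `(k+1)P_G`. -/

section CornerSimplex

variable {ι : Type*} [Fintype ι] {P : Set (ι → ℝ)}

theorem Convex.mem_of_nonneg_of_sum_le_one [DecidableEq ι] (hP : Convex ℝ P)
    (h0 : (0 : ι → ℝ) ∈ P) (hsingle : ∀ i, Pi.single i 1 ∈ P) {y : ι → ℝ} (hy : ∀ i, 0 ≤ y i)
    (hsum : ∑ i, y i ≤ 1) : y ∈ P := by
  have h := hP.sum_mem (t := (univ : Finset (Option ι)))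
    (w := fun o => o.elim (1 - ∑ i, y i) y) (z := fun o => o.elim 0 (Pi.single · 1))
    (by rintro (_ | i) _ <;> simp [hsum, hy _]) (by simp [Fintype.sum_option])
    (by rintro (_ | i) _ <;> simp [h0, hsingle])
  have hy_eq : ∑ i, y i • (Pi.single i 1 : ι → ℝ) = y := by
    simp_rw [← Pi.single_smul', smul_eq_mul, mul_one, Finset.univ_sum_single]
  simpa [Fintype.sum_option, hy_eq] using h

theorem isOpen_setOf_pos_sum_lt_one : IsOpen {y : ι → ℝ | (∀ i, 0 < y i) ∧ ∑ i, y i < 1} := by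
  have hpos : IsOpen {y : ι → ℝ | ∀ i, 0 < y i} := by
    simpa [Set.pi] using isOpen_set_pi (i := Set.univ) Set.finite_univ
      (s := fun _ : ι => Set.Ioi (0 : ℝ)) (fun _ _ => isOpen_Ioi)
  exact hpos.inter
    (isOpen_lt (continuous_finsetSum _ fun i _ => continuous_apply i) continuous_const)

end CornerSimplex

theorem smul_mem_interior_dilate {ι : Type*} {P : Set (ι → ℝ)} {k : ℕ} (hk : k ≠ 0)
    {x : ι → ℝ} (hx : x ∈ interior P) : (k : ℝ) • x ∈ interior (dilate k P) := by
  have hk' : (k : ℝ) ≠ 0 := Nat.cast_ne_zero.mpr hk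
  rw [dilate, Set.image_smul, interior_smul₀ hk']
  exact Set.smul_mem_smul_set hx

theorem smul_mem_openSegment_smul {E : Type*} [AddCommGroup E] [Module ℝ E] {s t u : ℝ}
    (ht : t ∈ Set.Ioo s u) (v : E) : t • v ∈ openSegment ℝ (s • v) (u • v) := by
  have h := Set.mem_image_of_mem (LinearMap.toSpanSingleton ℝ E v).toAffineMap
    (Ioo_subset_openSegment ht)
  rwa [image_openSegment] at h

section StablePolytope

variable {V : Type*} (G : SimpleGraph V)

theorem indicator_mem_stablePolytope {S : Set V} (hS : ∀ u ∈ S, ∀ v ∈ S, ¬ G.Adj u v) :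
    S.indicator (fun _ => (1 : ℝ)) ∈ stablePolytope G :=
  subset_convexHull ℝ _ ⟨S, hS, rfl⟩

theorem convex_stablePolytope : Convex ℝ (stablePolytope G) := convex_convexHull ℝ _

theorem zero_mem_stablePolytope : (0 : V → ℝ) ∈ stablePolytope G := by
  have h := indicator_mem_stablePolytope G (S := ∅) (by simp)
  rwa [Set.indicator_empty] at h

theorem single_mem_stablePolytope [DecidableEq V] (v : V) :
    Pi.single v 1 ∈ stablePolytope G := by
  have h := indicator_mem_stablePolytope G (S := {v}) (by rintro u rfl w rfl; exact G.irrefl)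
  rwa [Set.indicator_singleton] at h

theorem mem_stablePolytope_of_nonneg_of_sum_le_one [Fintype V] {y : V → ℝ}
    (hy : ∀ v, 0 ≤ y v) (hsum : ∑ v, y v ≤ 1) : y ∈ stablePolytope G := by
  classical
  exact (convex_stablePolytope G).mem_of_nonneg_of_sum_le_one (zero_mem_stablePolytope G)
    (single_mem_stablePolytope G) hy hsum

theorem inv_card_smul_one_mem_stablePolytope {α : Type*} [Fintype α] [Nonempty α]
    (C : G.Coloring α) : (Fintype.card α : ℝ)⁻¹ • (1 : V → ℝ) ∈ stablePolytope G := by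
  classical
  have hclass : ∀ a, {v | C v = a}.indicator (fun _ => (1 : ℝ)) ∈ stablePolytope G := fun a =>
    indicator_mem_stablePolytope G fun u hu v hv huv => C.valid huv (hu.trans hv.symm)
  have hpartition : ∑ a, {v | C v = a}.indicator (fun _ => (1 : ℝ)) = 1 := by
    funext v
    simp [Set.indicator_apply]
  have h := (convex_stablePolytope G).sum_mem (t := univ)
    (w := fun _ => (Fintype.card α : ℝ)⁻¹)
    (fun _ _ => by positivity) (by simp) (fun a _ => hclass a)
  rwa [← Finset.smul_sum, hpartition] at h

theorem inv_card_add_one_smul_one_mem_interior_stablePolytope [Fintype V] {α : Type*}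
    [Fintype α] (C : G.Coloring α) :
    ((Fintype.card α : ℝ) + 1)⁻¹ • (1 : V → ℝ) ∈ interior (stablePolytope G) := by
  set k : ℝ := (Fintype.card α : ℝ)
  set n : ℝ := (Fintype.card V : ℝ)
  have hU : {y : V → ℝ | (∀ v, 0 < y v) ∧ ∑ v, y v < 1} ⊆ interior (stablePolytope G) :=
    interior_maximal (fun y hy => mem_stablePolytope_of_nonneg_of_sum_le_one G
      (fun v => (hy.1 v).le) hy.2.le) isOpen_setOf_pos_sum_lt_one
  rcases isEmpty_or_nonempty V with hV | hV
  · exact hU ⟨isEmptyElim, by simp⟩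
  have : Nonempty α := ⟨C hV.some⟩
  have hk : 0 < k := by positivity
  have hn : 0 < n := by positivity
  set δ : ℝ := ((n + 1) * (k + 1))⁻¹
  have hδ : δ • (1 : V → ℝ) ∈ interior (stablePolytope G) := by
    refine hU ⟨fun _ => ?_, ?_⟩ <;> simp only [Pi.smul_apply, Pi.one_apply, smul_eq_mul,
      mul_one, Finset.sum_const, Finset.card_univ, nsmul_eq_mul]
    · positivity
    · rw [mul_inv_lt_iff₀ (by positivity)]
      nlinarith
  refine (convex_stablePolytope G).openSegment_interior_self_subset_interior hδ
    (inv_card_smul_one_mem_stablePolytope G C) (smul_mem_openSegment_smul ⟨?_, ?_⟩ _)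
  · exact inv_strictAnti₀ (by positivity) (by nlinarith)
  · exact inv_strictAnti₀ hk (by linarith)

end StablePolytope

theorem codeg_stablePolytope_le_card_add_one {V : Type*} [Fintype V] {G : SimpleGraph V}
    {α : Type*} [Fintype α] (C : G.Coloring α) :
    codeg (stablePolytope G) ≤ Fintype.card α + 1 := by
  have hone :
      ((Fintype.card α + 1 : ℕ) : ℝ) • ((Fintype.card α : ℝ) + 1)⁻¹ • (1 : V → ℝ) = 1 := by
    rw [smul_smul, Nat.cast_succ, mul_inv_cancel₀ (by positivity), one_smul]
  refine Nat.sInf_le ⟨Nat.succ_pos _, 1, fun _ => ⟨1, by simp⟩, ?_⟩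
  rw [← hone]
  exact smul_mem_interior_dilate (Nat.succ_ne_zero _)
    (inv_card_add_one_smul_one_mem_interior_stablePolytope G C)

/-- `codeg(P_G) ≤ χ(G) + 1`. -/
theorem stmt3 {n : ℕ} (G : SimpleGraph (Fin n)) :
    (codeg (stablePolytope G) : ℕ∞) ≤ G.chromaticNumber + 1 := by
  obtain ⟨C⟩ := G.colorable_chromaticNumber_of_fintype
  have h := codeg_stablePolytope_le_card_add_one C
  rw [Fintype.card_fin] at h
  calc (codeg (stablePolytope G) : ℕ∞) ≤ (G.chromaticNumber.toNat + 1 : ℕ) := by exact_mod_cast h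
    _ = G.chromaticNumber + 1 := by
      rw [Nat.cast_succ, ENat.natCast_toNat
        (SimpleGraph.chromaticNumber_ne_top_iff_exists.mpr ⟨_, G.colorable_of_fintype⟩)]
end
end

section
/- If G is a perfect graph, then codeg(P_G) = ω(G) + 1 = χ(G) + 1. -/
open Finset

noncomputable section

/-- A graph is perfect if every induced subgraph `H` satisfies `ω(H) = χ(H)`. -/
def IsPerfect {V : Type*} (G : SimpleGraph V) : Prop :=
  ∀ s : Set V, ((G.induce s).cliqueNum : ℕ∞) = (G.induce s).chromaticNumber

open Pointwise Topology

/-! The stable set polytope `P` lies in the halfspaces `x i ≥ 0` and `∑ i ∈ Q, x i ≤ 1` for every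
clique `Q`. A lattice point in the interior of `kP` therefore has all coordinates `≥ 1` and
satisfies `∑ i ∈ Q, x i < k` strictly, whence `ω < k`. Conversely, perfection gives an
`ω`-colouring, whose colour classes are vertices of `P` summing to the all-ones vector `𝟙`; so
`𝟙 ∈ ωP`, and as `P` contains a small positive multiple of `𝟙` in its interior, `𝟙` is an
interior point of `ωP + P = (ω + 1)P`. -/

section Convex

variable {E : Type*} [AddCommGroup E] [Module ℝ E] {s : Set E}

lemma Convex.sum_mem_card_smul (hs : Convex ℝ s) (hne : s.Nonempty) {ι : Type*} (t : Finset ι)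
    {f : ι → E} (hf : ∀ i ∈ t, f i ∈ s) : ∑ i ∈ t, f i ∈ (#t : ℝ) • s := by
  classical
  induction t using Finset.induction_on with
  | empty => simp [Set.zero_smul_set hne]
  | insert a t ha ih =>
    rw [Finset.sum_insert ha, Finset.card_insert_of_notMem ha, Nat.cast_succ, add_comm,
      hs.add_smul zero_le_one (Nat.cast_nonneg _), one_smul]
    exact Set.add_mem_add (hf a (Finset.mem_insert_self a t))
      (ih fun i hi => hf i (Finset.mem_insert_of_mem hi))

lemma Convex.sum_smul_mem_of_sum_le_one (hs : Convex ℝ s) (h0 : 0 ∈ s) {ι : Type*}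
    (t : Finset ι) {w : ι → ℝ} {z : ι → E} (hw : ∀ i ∈ t, 0 ≤ w i)
    (hw1 : ∑ i ∈ t, w i ≤ 1) (hz : ∀ i ∈ t, z i ∈ s) : ∑ i ∈ t, w i • z i ∈ s := by
  rcases (Finset.sum_nonneg hw).eq_or_lt with hW | hW
  · have hw0 := (Finset.sum_eq_zero_iff_of_nonneg hw).1 hW.symm
    rw [Finset.sum_eq_zero fun i hi => by rw [hw0 i hi, zero_smul]]
    exact h0
  · have hc := hs.centerMass_mem hw hW hz
    have := hs.smul_mem_of_zero_mem h0 hc ⟨hW.le, hw1⟩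
    rwa [Finset.centerMass, smul_inv_smul₀ hW.ne'] at this

end Convex

lemma exists_pos_sub_add_smul_mem_of_mem_interior {E : Type*} [AddCommGroup E] [Module ℝ E]
    [TopologicalSpace E] [IsTopologicalAddGroup E] [ContinuousSMul ℝ E] {A : Set E} {x : E}
    (hx : x ∈ interior A) (v : E) : ∃ δ : ℝ, 0 < δ ∧ x - δ • v ∈ A ∧ x + δ • v ∈ A := by
  have hline : ∀ᶠ t in 𝓝 (0 : ℝ), x + t • v ∈ A :=
    (Continuous.continuousAt (by fun_prop)).preimage_mem_nhds
      (by simpa using mem_interior_iff_mem_nhds.1 hx)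
  obtain ⟨ε, hε, hA⟩ := Metric.eventually_nhds_iff.1 hline
  refine ⟨ε / 2, by positivity, ?_, hA ?_⟩
  · simpa [sub_eq_add_neg, neg_smul] using hA (y := -(ε / 2)) (by simp [abs_of_pos hε]; linarith)
  · simp [abs_of_pos hε]; linarith

namespace SimpleGraph

variable {V : Type*} (G : SimpleGraph V)

lemma convex_stablePolytope : Convex ℝ (stablePolytope G) := convex_convexHull ℝ _

lemma indicator_mem_stablePolytope {S : Set V} (hS : ∀ u ∈ S, ∀ v ∈ S, ¬ G.Adj u v) :
    S.indicator (fun _ => (1 : ℝ)) ∈ stablePolytope G :=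
  subset_convexHull ℝ _ ⟨S, hS, rfl⟩

lemma zero_mem_stablePolytope : 0 ∈ stablePolytope G := by
  have h := G.indicator_mem_stablePolytope (S := ∅) (by simp)
  rwa [Set.indicator_empty] at h

lemma nonneg_of_mem_stablePolytope {x : V → ℝ} (hx : x ∈ stablePolytope G) (i : V) :
    0 ≤ x i := by
  refine convexHull_min ?_ ((convex_Ici (0 : ℝ)).linear_preimage (LinearMap.proj i)) hx
  rintro _ ⟨S, -, rfl⟩
  exact Set.indicator_nonneg (fun _ _ => zero_le_one' ℝ) i

lemma sum_le_one_of_mem_stablePolytope {Q : Finset V} (hQ : G.IsClique Q) {x : V → ℝ}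
    (hx : x ∈ stablePolytope G) : ∑ i ∈ Q, x i ≤ 1 := by
  classical
  suffices x ∈ (∑ i ∈ Q, LinearMap.proj i : (V → ℝ) →ₗ[ℝ] ℝ) ⁻¹' Set.Iic 1 by simpa using this
  refine convexHull_min ?_ ((convex_Iic 1).linear_preimage _) hx
  rintro _ ⟨S, hS, rfl⟩
  simp only [Set.mem_preimage, LinearMap.coe_sum, Finset.sum_apply, LinearMap.coe_proj,
    Function.eval, Set.indicator_apply, Finset.sum_boole, Set.mem_Iic, Nat.cast_le_one]
  refine Finset.card_le_one.2 fun a ha b hb => ?_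
  rw [Finset.mem_filter] at ha hb
  by_contra hab
  exact hS a ha.2 b hb.2 (hQ ha.1 hb.1 hab)

lemma mem_stablePolytope_of_nonneg_of_sum_le_one [Fintype V] {x : V → ℝ} (h0 : ∀ i, 0 ≤ x i)
    (h1 : ∑ i, x i ≤ 1) : x ∈ stablePolytope G := by
  classical
  have hx : x = ∑ i, x i • ({i} : Set V).indicator (fun _ => (1 : ℝ)) := by
    ext v; simp [Finset.sum_apply, Pi.single_apply]
  rw [hx]
  refine G.convex_stablePolytope.sum_smul_mem_of_sum_le_one G.zero_mem_stablePolytope _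
    (fun i _ => h0 i) h1 fun i _ => G.indicator_mem_stablePolytope ?_
  simp only [Set.mem_singleton_iff]
  rintro u rfl v rfl
  exact G.irrefl

lemma const_mem_interior_stablePolytope [Fintype V] {ε : ℝ} (hε : 0 < ε)
    (hεV : Fintype.card V * ε < 1) :
    (fun _ => ε) ∈ interior (stablePolytope G) := by
  let U : Set (V → ℝ) := (⋂ i, {x | 0 < x i}) ∩ {x | ∑ i, x i < 1}
  have hU : IsOpen U :=
    (isOpen_iInter_of_finite fun i => isOpen_lt continuous_const (continuous_apply i)).inter
      (isOpen_lt (continuous_finsetSum _ fun i _ => continuous_apply i) continuous_const)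
  refine mem_interior.2 ⟨U, fun x hx => ?_, hU, ?_⟩
  · simp only [U, Set.mem_inter_iff, Set.mem_iInter, Set.mem_ofPred_eq] at hx
    exact G.mem_stablePolytope_of_nonneg_of_sum_le_one (fun i => (hx.1 i).le) hx.2.le
  · simpa [U, hε] using hεV

lemma one_mem_smul_stablePolytope {k : ℕ} (C : G.Coloring (Fin k)) :
    (1 : V → ℝ) ∈ (k : ℝ) • stablePolytope G := by
  classical
  have hclasses : (1 : V → ℝ) = ∑ j, {v | C v = j}.indicator (fun _ => (1 : ℝ)) := by
    ext v; simp [Finset.sum_apply, Set.indicator_apply]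
  rw [hclasses]
  have h := G.convex_stablePolytope.sum_mem_card_smul ⟨0, G.zero_mem_stablePolytope⟩ univ
    fun j _ => G.indicator_mem_stablePolytope fun u (hu : C u = j) v (hv : C v = j) huv =>
      C.valid huv (hu.trans hv.symm)
  rwa [Finset.card_univ, Fintype.card_fin] at h

lemma one_mem_interior_smul_stablePolytope [Fintype V] {k : ℕ} (C : G.Coloring (Fin k)) :
    (1 : V → ℝ) ∈ interior (((k : ℝ) + 1) • stablePolytope G) := by
  set ε : ℝ := (Fintype.card V + 1)⁻¹
  have hε : 0 < ε := by positivity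
  have hε1 : ε ≤ 1 := inv_le_one_of_one_le₀ (by simp)
  have hεV : Fintype.card V * ε < 1 := by
    rw [← div_eq_mul_inv, div_lt_one (by positivity)]; linarith
  have hsplit :
      ((k : ℝ) + 1) • stablePolytope G = (k : ℝ) • stablePolytope G + stablePolytope G := by
    rw [G.convex_stablePolytope.add_smul (Nat.cast_nonneg k) zero_le_one, one_smul]
  have hkP : (1 - ε) • (1 : V → ℝ) ∈ (k : ℝ) • stablePolytope G :=
    (G.convex_stablePolytope.smul k).smul_mem_of_zero_mem
      (Set.zero_mem_smul_set G.zero_mem_stablePolytope) (G.one_mem_smul_stablePolytope C)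
      ⟨by linarith, by linarith⟩
  have hone : (1 : V → ℝ) = (1 - ε) • 1 + fun _ => ε := by ext; simp
  rw [hsplit, hone]
  exact interior_maximal (Set.add_subset_add_left interior_subset) isOpen_interior.add_left
    (Set.add_mem_add hkP (G.const_mem_interior_stablePolytope hε hεV))

lemma exists_isLatticePt_mem_interior_dilate_stablePolytope [Fintype V] {k : ℕ}
    (C : G.Coloring (Fin k)) :
    ∃ x, IsLatticePt x ∧ x ∈ interior (dilate (k + 1) (stablePolytope G)) := by
  refine ⟨1, fun _ => ⟨1, by simp⟩, ?_⟩
  rw [dilate, Set.image_smul]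
  exact_mod_cast G.one_mem_interior_smul_stablePolytope C

lemma card_lt_of_isLatticePt_mem_interior_dilate {k : ℕ} (hk : 0 < k) {x : V → ℝ}
    (hx : IsLatticePt x) (hint : x ∈ interior (dilate k (stablePolytope G))) {Q : Finset V}
    (hQ : G.IsClique Q) : #Q < k := by
  obtain ⟨δ, hδ, ⟨y, hy, hyx⟩, ⟨z, hz, hzx⟩⟩ :=
    exists_pos_sub_add_smul_mem_of_mem_interior hint (1 : V → ℝ)
  have hx_one : ∀ i, 1 ≤ x i := by
    intro i
    have hyi : (k : ℝ) * y i = x i - δ := by simpa using congrFun hyx i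
    have hxi : 0 < x i := by nlinarith [G.nonneg_of_mem_stablePolytope hy i]
    obtain ⟨m, hm⟩ := hx i
    rw [hm] at hxi ⊢
    exact_mod_cast (Int.cast_pos.1 hxi : 0 < m)
  have hsum : ∑ i ∈ Q, (x i + δ) ≤ k := by
    have hzi : ∀ i, x i + δ = k * z i := fun i => by simpa using (congrFun hzx i).symm
    rw [Finset.sum_congr rfl fun i _ => hzi i, ← Finset.mul_sum]
    simpa using mul_le_mul_of_nonneg_left (G.sum_le_one_of_mem_stablePolytope hQ hz)
      (Nat.cast_nonneg k)
  have hQx : (#Q : ℝ) ≤ ∑ i ∈ Q, x i := by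
    simpa using Finset.sum_le_sum fun i (_ : i ∈ Q) => hx_one i
  rcases Nat.eq_zero_or_pos #Q with hQ0 | hQ0
  · omega
  · rw [Finset.sum_add_distrib, Finset.sum_const, nsmul_eq_mul] at hsum
    have : (0 : ℝ) < #Q * δ := by positivity
    exact_mod_cast (by linarith : (#Q : ℝ) < k)

end SimpleGraph

lemma IsPerfect.chromaticNumber_eq_cliqueNum {V : Type*} [Finite V] {G : SimpleGraph V}
    (hG : IsPerfect G) :
    G.chromaticNumber = G.cliqueNum := by
  have h := hG Set.univ
  rw [SimpleGraph.chromaticNumber_congr G.induceUnivIso] at h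
  refine le_antisymm ?_ G.cliqueNum_le_chromaticNumber
  rw [← h]
  exact_mod_cast G.cliqueNum_induce_le Set.univ

/-- If `G` is perfect, then `codeg(P_G) = ω(G) + 1 = χ(G) + 1`. -/
theorem stmt4 {n : ℕ} (G : SimpleGraph (Fin n)) (hG : IsPerfect G) :
    codeg (stablePolytope G) = G.cliqueNum + 1 ∧
      (codeg (stablePolytope G) : ℕ∞) = G.chromaticNumber + 1 := by
  have hχ := hG.chromaticNumber_eq_cliqueNum
  obtain ⟨C⟩ : G.Colorable G.cliqueNum := SimpleGraph.chromaticNumber_le_iff_colorable.1 hχ.le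
  have hcodeg : codeg (stablePolytope G) = G.cliqueNum + 1 := by
    refine IsLeast.csInf_eq ⟨⟨G.cliqueNum.succ_pos,
      G.exists_isLatticePt_mem_interior_dilate_stablePolytope C⟩, ?_⟩
    rintro k ⟨hk, x, hx, hint⟩
    obtain ⟨Q, hQ⟩ := G.exists_isNClique_cliqueNum
    exact hQ.card_eq ▸ G.card_lt_of_isLatticePt_mem_interior_dilate hk hx hint hQ.isClique
  refine ⟨hcodeg, ?_⟩
  rw [hcodeg, hχ, Nat.cast_succ]
end
end

section
/- Let m ≥ 3 be an odd integer and G = K_m the complete graph on m vertices. Then the codegree of the matching polytope M_{K_m} equals Δ(K_m) + 2 = m + 1. -/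
open Finset

noncomputable section

/-- The matching polytope of `G`. -/
def matchingPolytope {V : Type*} (G : SimpleGraph V) : Set (G.edgeSet → ℝ) :=
  convexHull ℝ {x | ∃ M : Set (Sym2 V), M ⊆ G.edgeSet ∧
    (∀ e ∈ M, ∀ f ∈ M, e ≠ f → ∀ v : V, ¬(v ∈ e ∧ v ∈ f)) ∧
    x = Set.indicator {e : G.edgeSet | (e : Sym2 V) ∈ M} (fun _ => (1 : ℝ))}

/-!
A matching of a graph on `n` vertices has at most `⌊n/2⌋` edges, so the matching polytope lies
in the simplex `{w ≥ 0, ∑ w ≤ ⌊n/2⌋}`. A lattice point in the interior of `k • M_G` then has all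
coordinates `≥ 1` and coordinate sum `< k ⌊n/2⌋`; for `K_m`, `m` odd, this reads
`m (m - 1)/2 < k (m - 1)/2`, so `k ≥ m + 1`.

Conversely, colouring the edge `{a, b}` of `K_m` by `a + b mod m` splits the edges into `m`
matchings, whose average is the constant vector `1/m`. The matching polytope also contains the
simplex `conv {0, e_i}`, and `1/(m+1)` lies strictly between `1/m` and an interior point `ε` of
that simplex, hence in the interior of `M_{K_m}`; scaling by `m + 1` gives the lattice point `1`.
-/

open Topology

lemma interior_dilate {ι : Type*} {k : ℕ} (hk : k ≠ 0) (P : Set (ι → ℝ)) :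
    interior (dilate k P) = dilate k (interior P) :=
  interior_smul₀ (Nat.cast_ne_zero.mpr hk) P

lemma IsLatticePt.one_le_of_pos_s9 {ι : Type*} {y : ι → ℝ} (hy : IsLatticePt y) {i : ι}
    (hi : 0 < y i) : 1 ≤ y i := by
  obtain ⟨n, hn⟩ := hy i
  rw [hn] at hi ⊢
  exact_mod_cast (Int.cast_pos.mp hi : (0 : ℤ) < n)

lemma exists_pos_add_smul_mem_of_mem_interior {E : Type*} [AddCommGroup E] [Module ℝ E]
    [TopologicalSpace E] [ContinuousAdd E] [ContinuousSMul ℝ E] {s : Set E} {x : E}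
    (hx : x ∈ interior s) (v : E) : ∃ t : ℝ, 0 < t ∧ x + t • v ∈ s := by
  have hcont : Continuous fun t : ℝ => x + t • v := by fun_prop
  have hnhds : (fun t : ℝ => x + t • v) ⁻¹' s ∈ 𝓝 (0 : ℝ) :=
    hcont.continuousAt.preimage_mem_nhds (by simpa using mem_interior_iff_mem_nhds.mp hx)
  obtain ⟨t, hts, ht⟩ :=
    ((eventually_nhdsWithin_of_eventually_nhds hnhds).and
      (self_mem_nhdsWithin (s := Set.Ioi 0))).exists
  exact ⟨t, ht, hts⟩

section CornerSimplex

variable (ι : Type*) [Fintype ι]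

/-- The dilated simplex `c • conv {0, e_i}`. -/
def cornerSimplex (c : ℝ) : Set (ι → ℝ) :=
  {w | (∀ i, 0 ≤ w i) ∧ ∑ i, w i ≤ c}

variable {ι}

lemma convex_cornerSimplex (c : ℝ) : Convex ℝ (cornerSimplex ι c) := by
  have hsum : IsLinearMap ℝ (fun w : ι → ℝ => ∑ i, w i) :=
    ⟨fun v w => sum_add_distrib, fun a w => (mul_sum _ _ _).symm⟩
  have hnonneg : Convex ℝ {w : ι → ℝ | ∀ i, 0 ≤ w i} := convex_Ici 0
  exact hnonneg.inter (convex_halfSpace_le hsum c)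

lemma subset_interior_cornerSimplex {c : ℝ} :
    {w | (∀ i, 0 < w i) ∧ ∑ i, w i < c} ⊆ interior (cornerSimplex ι c) := by
  refine interior_maximal (fun w hw => ⟨fun i => (hw.1 i).le, hw.2.le⟩) ?_
  simp only [Set.ofPred_and, Set.ofPred_forall]
  exact (isOpen_iInter_of_finite fun i => isOpen_lt continuous_const (continuous_apply i)).inter
    (isOpen_lt (continuous_finsetSum _ fun i _ => continuous_apply i) continuous_const)

lemma interior_cornerSimplex_subset [Nonempty ι] {c : ℝ} :
    interior (cornerSimplex ι c) ⊆ {w | (∀ i, 0 < w i) ∧ ∑ i, w i < c} := by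
  intro x hx
  refine ⟨fun i => ?_, ?_⟩
  · classical
    obtain ⟨t, ht, hxt⟩ := exists_pos_add_smul_mem_of_mem_interior hx (-Pi.single i 1)
    have := hxt.1 i
    simp only [Pi.add_apply, Pi.smul_apply, Pi.neg_apply, Pi.single_eq_same, smul_eq_mul] at this
    linarith
  · obtain ⟨t, ht, hxt⟩ := exists_pos_add_smul_mem_of_mem_interior hx (fun _ => 1)
    have hsum := hxt.2
    simp only [Pi.add_apply, Pi.smul_apply, smul_eq_mul, mul_one, sum_add_distrib,
      sum_const, card_univ, nsmul_eq_mul] at hsum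
    have hcard : (0 : ℝ) < Fintype.card ι := by exact_mod_cast Fintype.card_pos
    nlinarith

end CornerSimplex

namespace SimpleGraph

variable {V : Type*} {G : SimpleGraph V}

lemma indicator_mem_matchingPolytope {S : Set G.edgeSet} (hS : G.lineGraph.IsIndepSet S) :
    S.indicator (fun _ => (1 : ℝ)) ∈ matchingPolytope G := by
  refine subset_convexHull ℝ _ ⟨Subtype.val '' S, by simp, ?_, by simp⟩
  rintro _ ⟨e, he, rfl⟩ _ ⟨f, hf, rfl⟩ hef v hv
  have hef' : e ≠ f := ne_of_apply_ne _ hef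
  exact hS he hf hef' (lineGraph_adj_iff_exists.mpr ⟨hef', v, hv⟩)

lemma zero_mem_matchingPolytope : (0 : G.edgeSet → ℝ) ∈ matchingPolytope G := by
  simpa [Pi.zero_def] using indicator_mem_matchingPolytope (G := G) (S := ∅) (by simp)

lemma single_mem_matchingPolytope [DecidableEq G.edgeSet] (f : G.edgeSet) :
    Pi.single f (1 : ℝ) ∈ matchingPolytope G := by
  simpa [Set.indicator_singleton] using
    indicator_mem_matchingPolytope (G := G) (S := {f}) (by simp)

lemma cornerSimplex_one_subset_matchingPolytope [Fintype G.edgeSet] :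
    cornerSimplex G.edgeSet 1 ⊆ matchingPolytope G := by
  classical
  rintro w ⟨hw0, hw1⟩
  let weight : Option G.edgeSet → ℝ := fun j => j.elim (1 - ∑ e, w e) w
  let point : Option G.edgeSet → G.edgeSet → ℝ := fun j => j.elim 0 fun e => Pi.single e 1
  have hcomb : ∑ j, weight j • point j = w := by
    ext e
    simp [weight, point, Fintype.sum_option, Finset.sum_apply, Pi.single_apply]
  rw [← hcomb]
  refine (convex_convexHull ℝ _).sum_mem (fun j _ => ?_) ?_ (fun j _ => ?_)
  · cases j <;> simp [weight, hw0, hw1]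
  · simp [weight, Fintype.sum_option]
  · cases j
    · exact zero_mem_matchingPolytope
    · exact single_mem_matchingPolytope _

lemma two_mul_card_le_of_isIndepSet_lineGraph [Fintype V] {T : Finset G.edgeSet}
    (hT : G.lineGraph.IsIndepSet (T : Set G.edgeSet)) : 2 * #T ≤ Fintype.card V := by
  classical
  have hdisj : (T : Set G.edgeSet).PairwiseDisjoint fun e => (e : Sym2 V).toFinset := by
    intro e he f hf hef
    refine Finset.disjoint_left.mpr fun v hve hvf => hT he hf hef ?_
    exact lineGraph_adj_iff_exists.mpr ⟨hef, v, by simpa using hve, by simpa using hvf⟩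
  calc 2 * #T = ∑ e ∈ T, #(e : Sym2 V).toFinset := by
        rw [sum_congr rfl fun e _ =>
          Sym2.card_toFinset_of_not_isDiag _ (G.not_isDiag_of_mem_edgeSet e.2)]
        simp [mul_comm]
    _ = #(T.biUnion fun e => (e : Sym2 V).toFinset) := (card_biUnion hdisj).symm
    _ ≤ Fintype.card V := card_le_univ _

lemma matchingPolytope_subset_cornerSimplex [Fintype V] [Fintype G.edgeSet] :
    matchingPolytope G ⊆ cornerSimplex G.edgeSet (Fintype.card V / 2 : ℕ) := by
  classical
  refine convexHull_min ?_ (convex_cornerSimplex _)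
  rintro _ ⟨M, -, hM, rfl⟩
  refine ⟨fun e => Set.indicator_nonneg (fun _ _ => zero_le_one) e, ?_⟩
  let T : Finset G.edgeSet := {e | (e : Sym2 V) ∈ M}
  have hT : 2 * #T ≤ Fintype.card V := by
    refine two_mul_card_le_of_isIndepSet_lineGraph fun e he f hf hef hadj => ?_
    obtain ⟨-, v, hve, hvf⟩ := lineGraph_adj_iff_exists.mp hadj
    exact hM _ (by simpa [T] using he) _ (by simpa [T] using hf)
      (by simpa [Subtype.ext_iff] using hef) v ⟨hve, hvf⟩
  have : ∑ e, Set.indicator {e : G.edgeSet | (e : Sym2 V) ∈ M} (fun _ => (1 : ℝ)) e = #T := by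
    simp [Set.indicator_apply, sum_boole, T]
  rw [this]
  exact_mod_cast (Nat.le_div_iff_mul_le two_pos).mpr (by omega)

lemma const_inv_card_mem_matchingPolytope {α : Type*} [Fintype α] [Nonempty α]
    (C : G.lineGraph.Coloring α) : (fun _ => (Fintype.card α : ℝ)⁻¹) ∈ matchingPolytope G := by
  classical
  have hcomb : ∑ a, (Fintype.card α : ℝ)⁻¹ • {e | C e = a}.indicator (fun _ => (1 : ℝ)) =
      fun _ => (Fintype.card α : ℝ)⁻¹ := by
    ext e
    simp [Finset.sum_apply, Set.indicator_apply]
  rw [← hcomb]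
  refine (convex_convexHull ℝ _).sum_mem (fun _ _ => by positivity) ?_ fun a _ =>
    indicator_mem_matchingPolytope fun e he f hf _ hadj => C.valid hadj (he.trans hf.symm)
  simp

lemma const_mem_openSegment {ι : Type*} {a b c : ℝ} (hab : a < b) (hbc : b < c) :
    (fun _ : ι => b) ∈ openSegment ℝ (fun _ => a) (fun _ => c) := by
  obtain ⟨p, q, hp, hq, hpq, h⟩ : b ∈ openSegment ℝ a c := by
    rw [openSegment_eq_Ioo (hab.trans hbc)]; exact ⟨hab, hbc⟩
  exact ⟨p, q, hp, hq, hpq, funext fun _ => by simpa using h⟩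

lemma const_mem_interior_matchingPolytope [Fintype G.edgeSet] {α : Type*} [Fintype α]
    [Nonempty α] (C : G.lineGraph.Coloring α) {t : ℝ} (ht0 : 0 < t)
    (ht : t < (Fintype.card α : ℝ)⁻¹) : (fun _ => t) ∈ interior (matchingPolytope G) := by
  set N : ℝ := (Fintype.card G.edgeSet : ℝ)
  set ε := t / (N * t + 2)
  have hN : 0 ≤ N := Nat.cast_nonneg _
  have hε0 : 0 < ε := by positivity
  have hεt : ε < t := by
    rw [div_lt_iff₀ (by positivity)]
    nlinarith [mul_nonneg (mul_nonneg hN ht0.le) ht0.le]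
  have hεN : N * ε < 1 := by rw [← mul_div_assoc, div_lt_one (by positivity)]; linarith
  have hε : (fun _ => ε) ∈ interior (matchingPolytope G) :=
    interior_mono cornerSimplex_one_subset_matchingPolytope <|
      subset_interior_cornerSimplex ⟨fun _ => hε0, by rwa [sum_const, card_univ, nsmul_eq_mul]⟩
  exact (convex_convexHull ℝ _).openSegment_interior_self_subset_interior hε
    (const_inv_card_mem_matchingPolytope C) (const_mem_openSegment hεt ht)

lemma card_edgeSet_lt_of_isLatticePt_mem_interior_dilate [Fintype V] [Fintype G.edgeSet]
    [Nonempty G.edgeSet] {k : ℕ} (hk : k ≠ 0) {y : G.edgeSet → ℝ} (hy : IsLatticePt y)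
    (hyk : y ∈ interior (dilate k (matchingPolytope G))) :
    Fintype.card G.edgeSet < k * (Fintype.card V / 2) := by
  rw [interior_dilate hk] at hyk
  obtain ⟨x, hx, rfl⟩ := hyk
  obtain ⟨hxpos, hxsum⟩ :=
    interior_cornerSimplex_subset (interior_mono matchingPolytope_subset_cornerSimplex hx)
  have hk : (0 : ℝ) < k := by positivity
  have hy1 : ∀ e, 1 ≤ (k : ℝ) * x e := fun e =>
    hy.one_le_of_pos_s9 (by simpa using mul_pos hk (hxpos e))
  have hcard : (Fintype.card G.edgeSet : ℝ) < k * (Fintype.card V / 2 : ℕ) :=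
    calc (Fintype.card G.edgeSet : ℝ) = ∑ _e : G.edgeSet, 1 := by simp
      _ ≤ ∑ e, (k : ℝ) * x e := sum_le_sum fun e _ => hy1 e
      _ = k * ∑ e, x e := (mul_sum _ _ _).symm
      _ < k * (Fintype.card V / 2 : ℕ) := mul_lt_mul_of_pos_left hxsum hk
  exact_mod_cast hcard

/-- Colour the edge `{a, b}` of `K_m` by `a + b ∈ ℤ/m`: edges `{v, a}`, `{v, b}` at a common
vertex get the same colour only if `a = b`. -/
def topLineGraphColoringFin (m : ℕ) [NeZero m] :
    (⊤ : SimpleGraph (Fin m)).lineGraph.Coloring (Fin m) :=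
  Coloring.mk (fun e => Sym2.lift ⟨fun a b => a + b, add_comm⟩ e) fun {e f} hadj hcol => by
    obtain ⟨hef, v, hve, hvf⟩ := lineGraph_adj_iff_exists.mp hadj
    obtain ⟨a, ha⟩ := Sym2.mem_iff_exists.mp hve
    obtain ⟨b, hb⟩ := Sym2.mem_iff_exists.mp hvf
    simp only [ha, hb, Sym2.lift_mk, add_right_inj] at hcol
    exact hef (Subtype.ext (by rw [ha, hb, hcol]))

lemma one_mem_interior_dilate_matchingPolytope_top (m : ℕ) [NeZero m] :
    (fun _ => 1) ∈ interior (dilate (m + 1) (matchingPolytope (⊤ : SimpleGraph (Fin m)))) := by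
  classical
  rw [interior_dilate m.succ_ne_zero]
  refine ⟨fun _ => ((m : ℝ) + 1)⁻¹,
    const_mem_interior_matchingPolytope (topLineGraphColoringFin m) (by positivity) ?_, ?_⟩
  · rw [Fintype.card_fin]
    exact inv_strictAnti₀ (by simp [NeZero.pos]) (by linarith)
  · ext
    simp [field]

lemma natCard_edgeSet_top_fin (m : ℕ) :
    Nat.card (⊤ : SimpleGraph (Fin m)).edgeSet = m.choose 2 := by
  classical
  rw [Nat.card_eq_fintype_card, ← edgeFinset_card, card_edgeFinset_top_eq_card_choose_two,
    Fintype.card_fin]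

lemma lt_of_isLatticePt_mem_interior_dilate_matchingPolytope_top {m k : ℕ} (hm : 3 ≤ m)
    (hodd : Odd m) [Fintype (⊤ : SimpleGraph (Fin m)).edgeSet] (hk : k ≠ 0)
    {y : (⊤ : SimpleGraph (Fin m)).edgeSet → ℝ} (hy : IsLatticePt y)
    (hyk : y ∈ interior (dilate k (matchingPolytope (⊤ : SimpleGraph (Fin m))))) : m < k := by
  have : Nonempty (⊤ : SimpleGraph (Fin m)).edgeSet :=
    ⟨⟨s(⟨0, by omega⟩, ⟨1, by omega⟩), by simp⟩⟩
  have hcard := card_edgeSet_lt_of_isLatticePt_mem_interior_dilate hk hy hyk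
  obtain ⟨t, rfl⟩ := hodd
  have ht : (2 * t + 1) / 2 = t := by omega
  rw [Fintype.card_eq_nat_card, natCard_edgeSet_top_fin, Nat.choose_two_right, Fintype.card_fin,
    ht,
    show (2 * t + 1) * (2 * t + 1 - 1) = 2 * ((2 * t + 1) * t) by rw [Nat.add_sub_cancel]; ring,
    Nat.mul_div_cancel_left _ two_pos] at hcard
  exact Nat.lt_of_mul_lt_mul_right hcard

end SimpleGraph

open scoped Classical in
/-- For odd `m ≥ 3`, the codegree of the matching polytope of `K_m` equals
`Δ(K_m) + 2 = m + 1`. -/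
theorem stmt9 (m : ℕ) (hm : 3 ≤ m) (hodd : Odd m) :
    codeg (matchingPolytope (⊤ : SimpleGraph (Fin m))) =
        (⊤ : SimpleGraph (Fin m)).maxDegree + 2 ∧
      (⊤ : SimpleGraph (Fin m)).maxDegree + 2 = m + 1 := by
  have : NeZero m := ⟨by omega⟩
  have hdeg : (⊤ : SimpleGraph (Fin m)).maxDegree + 2 = m + 1 := by
    rw [SimpleGraph.maxDegree_top, Fintype.card_fin]
    omega
  have hmem : m + 1 ∈ {k | 0 < k ∧ ∃ x, IsLatticePt x ∧
      x ∈ interior (dilate k (matchingPolytope (⊤ : SimpleGraph (Fin m))))} :=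
    ⟨m.succ_pos, fun _ => 1, fun _ => ⟨1, by simp⟩,
      SimpleGraph.one_mem_interior_dilate_matchingPolytope_top m⟩
  have hcodeg : codeg (matchingPolytope (⊤ : SimpleGraph (Fin m))) = m + 1 :=
    le_antisymm (Nat.sInf_le hmem) <| le_csInf ⟨_, hmem⟩ fun k ⟨hk, _, hy, hyk⟩ =>
      SimpleGraph.lt_of_isLatticePt_mem_interior_dilate_matchingPolytope_top hm hodd hk.ne' hy hyk
  exact ⟨hcodeg.trans hdeg.symm, hdeg⟩
end
end

section
/- Let G be an h-perfect graph. Then codeg(P_G) = ω(G) + 1. -/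
open Finset

noncomputable section

/-- `G` is h-perfect if its stable set polytope is cut out by the nonnegativity constraints,
the clique constraints, and the odd-cycle constraints. -/
def IsHPerfect {V : Type*} [Fintype V] [DecidableEq V] (G : SimpleGraph V) : Prop :=
  stablePolytope G =
    {x : V → ℝ |
      (∀ i, 0 ≤ x i) ∧
      (∀ Q : Finset V, G.IsClique (↑Q : Set V) → ∑ i ∈ Q, x i ≤ 1) ∧
      (∀ (v : V) (w : G.Walk v v), w.IsCycle → Odd w.length →
        ∑ i ∈ w.support.toFinset, x i ≤ ((w.support.toFinset.card : ℝ) - 1) / 2)}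

section Aux

variable {V : Type*} [Fintype V] [DecidableEq V] {G : SimpleGraph V}

lemma aux_cycle_card_support {v : V} {w : G.Walk v v} (hw : w.IsCycle) :
    w.support.toFinset.card = w.length := by
  cases w with
  | nil => exact absurd rfl hw.ne_nil
  | cons h p =>
    have hnd : p.support.Nodup := by
      have := hw.support_nodup
      rwa [SimpleGraph.Walk.support_cons] at this
    have hv : _ ∈ p.support := p.end_mem_support
    rw [SimpleGraph.Walk.support_cons, List.toFinset_cons,
      Finset.insert_eq_self.mpr (List.mem_toFinset.mpr hv),
      List.toFinset_card_of_nodup hnd, SimpleGraph.Walk.length_support,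
      SimpleGraph.Walk.length_cons]

lemma aux_cycle_two_le_cliqueNum {v : V} {w : G.Walk v v} (hw : w.IsCycle) :
    2 ≤ G.cliqueNum := by
  cases w with
  | nil => exact absurd rfl hw.ne_nil
  | @cons _ u _ h p =>
    have hclique : G.IsNClique 2 {v, u} := by
      constructor
      · rw [Finset.coe_insert, Finset.coe_singleton]
        exact SimpleGraph.isClique_pair.mpr fun _ => h
      · rw [Finset.card_insert_of_notMem (by simp [h.ne]), Finset.card_singleton]
    calc 2 = ({v, u} : Finset V).card := hclique.card_eq.symm
    _ ≤ G.cliqueNum := hclique.isClique.card_le_cliqueNum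

lemma aux_triangle_three_le_cliqueNum {v : V} {w : G.Walk v v} (hw : w.IsCycle)
    (h3 : w.length = 3) : 3 ≤ G.cliqueNum := by
  obtain ⟨s, hs⟩ := SimpleGraph.is3Clique_iff_exists_cycle_length_three.mpr ⟨v, w, hw, h3⟩
  calc 3 = s.card := hs.card_eq.symm
  _ ≤ G.cliqueNum := hs.isClique.card_le_cliqueNum

/-- The predicate that a finset is the support of an odd cycle. -/
def IsOddCycleSupport (G : SimpleGraph V) (T : Finset V) : Prop :=
  ∃ (v : V) (w : G.Walk v v), w.IsCycle ∧ Odd w.length ∧ w.support.toFinset = T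

lemma aux_open_subset_interior (k : ℕ) (hk : 0 < k) (hG : IsHPerfect G) :
    {x : V → ℝ | (∀ i, 0 < x i) ∧
      (∀ Q : Finset V, G.IsClique (↑Q : Set V) → ∑ i ∈ Q, x i < k) ∧
      (∀ T : Finset V, IsOddCycleSupport G T →
        ∑ i ∈ T, x i < k * ((T.card : ℝ) - 1) / 2)}
      ⊆ interior (dilate k (stablePolytope G)) := by
  set U : Set (V → ℝ) := {x : V → ℝ | (∀ i, 0 < x i) ∧
      (∀ Q : Finset V, G.IsClique (↑Q : Set V) → ∑ i ∈ Q, x i < k) ∧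
      (∀ T : Finset V, IsOddCycleSupport G T →
        ∑ i ∈ T, x i < k * ((T.card : ℝ) - 1) / 2)} with hU
  have hopen : IsOpen U := by
    have h1 : IsOpen {x : V → ℝ | ∀ i, 0 < x i} := by
      rw [Set.setOf_forall]
      exact isOpen_iInter_of_finite fun i =>
        isOpen_lt continuous_const (continuous_apply i)
    have h2 : IsOpen {x : V → ℝ | ∀ Q : Finset V, G.IsClique (↑Q : Set V) →
        ∑ i ∈ Q, x i < k} := by
      rw [Set.setOf_forall]
      refine isOpen_iInter_of_finite fun Q => ?_
      by_cases hQ : G.IsClique (↑Q : Set V)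
      · simp only [hQ, forall_true_left]
        exact isOpen_lt (continuous_finset_sum _ fun i _ => continuous_apply i)
          continuous_const
      · simp only [hQ, false_implies, Set.setOf_true]
        exact isOpen_univ
    have h3 : IsOpen {x : V → ℝ | ∀ T : Finset V, IsOddCycleSupport G T →
        ∑ i ∈ T, x i < k * ((T.card : ℝ) - 1) / 2} := by
      rw [Set.setOf_forall]
      refine isOpen_iInter_of_finite fun T => ?_
      by_cases hT : IsOddCycleSupport G T
      · simp only [hT, forall_true_left]
        exact isOpen_lt (continuous_finset_sum _ fun i _ => continuous_apply i)
          continuous_const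
      · simp only [hT, false_implies, Set.setOf_true]
        exact isOpen_univ
    have : U = {x : V → ℝ | ∀ i, 0 < x i} ∩
        ({x : V → ℝ | ∀ Q : Finset V, G.IsClique (↑Q : Set V) → ∑ i ∈ Q, x i < k} ∩
         {x : V → ℝ | ∀ T : Finset V, IsOddCycleSupport G T →
            ∑ i ∈ T, x i < k * ((T.card : ℝ) - 1) / 2}) := by
      ext x; simp [hU, Set.mem_setOf_eq, and_assoc]
    rw [this]
    exact h1.inter (h2.inter h3)
  have hsub : U ⊆ dilate k (stablePolytope G) := by
    intro x hx
    obtain ⟨hx1, hx2, hx3⟩ := hx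
    have hk0 : (0 : ℝ) < k := by exact_mod_cast hk
    refine ⟨(k : ℝ)⁻¹ • x, ?_, ?_⟩
    · rw [hG]
      refine ⟨fun i => ?_, fun Q hQ => ?_, fun v w hw hodd => ?_⟩
      · have h := hx1 i
        simp only [Pi.smul_apply, smul_eq_mul]
        positivity
      · have := hx2 Q hQ
        simp only [Pi.smul_apply, smul_eq_mul, ← Finset.mul_sum]
        rw [inv_mul_le_iff₀ hk0, mul_one]
        exact this.le
      · have := hx3 w.support.toFinset ⟨v, w, hw, hodd, rfl⟩
        simp only [Pi.smul_apply, smul_eq_mul, ← Finset.mul_sum]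
        rw [inv_mul_le_iff₀ hk0]
        calc ∑ i ∈ w.support.toFinset, x i
            ≤ k * ((w.support.toFinset.card : ℝ) - 1) / 2 := this.le
          _ = k * (((w.support.toFinset.card : ℝ) - 1) / 2) := by ring
    · simp only [smul_smul, mul_inv_cancel₀ (ne_of_gt hk0), one_smul]
  exact interior_maximal hsub hopen

end Aux

/-- If `G` is h-perfect, then `codeg(P_G) = ω(G) + 1`. -/
theorem stmt11 {V : Type*} [Fintype V] [DecidableEq V] (G : SimpleGraph V) (hG : IsHPerfect G) :
    codeg (stablePolytope G) = G.cliqueNum + 1 := by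
  have hk0 : ∀ k : ℕ, 0 < k → (0 : ℝ) < k := fun k hk => by exact_mod_cast hk
  -- membership of ω + 1
  have hmem : G.cliqueNum + 1 ∈
      {k | 0 < k ∧ ∃ x, IsLatticePt x ∧ x ∈ interior (dilate k (stablePolytope G))} := by
    refine ⟨Nat.succ_pos _, fun _ => (1 : ℝ), fun i => ⟨1, by norm_num⟩, ?_⟩
    apply aux_open_subset_interior (G.cliqueNum + 1) (Nat.succ_pos _) hG
    refine ⟨fun i => one_pos, fun Q hQ => ?_, fun T hT => ?_⟩
    · rw [Finset.sum_const, nsmul_eq_mul, mul_one]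
      have : Q.card ≤ G.cliqueNum := SimpleGraph.IsClique.card_le_cliqueNum (tc := hQ)
      exact_mod_cast Nat.lt_succ_of_le this
    · obtain ⟨v, w, hw, hodd, rfl⟩ := hT
      rw [Finset.sum_const, nsmul_eq_mul, mul_one]
      rw [aux_cycle_card_support hw]
      set ℓ := w.length with hℓ
      have h3 : 3 ≤ ℓ := hw.three_le_length
      by_cases h3' : ℓ = 3
      · have hω : 3 ≤ G.cliqueNum := aux_triangle_three_le_cliqueNum hw h3'
        rw [h3']
        have : (4 : ℝ) ≤ (G.cliqueNum : ℝ) + 1 := by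
          have : (3 : ℝ) ≤ (G.cliqueNum : ℝ) := by exact_mod_cast hω
          linarith
        push_cast
        nlinarith
      · have h5 : 5 ≤ ℓ := by
          rcases hodd with ⟨m, hm⟩
          omega
        have hω : 2 ≤ G.cliqueNum := aux_cycle_two_le_cliqueNum hw
        have hωR : (2 : ℝ) ≤ (G.cliqueNum : ℝ) := by exact_mod_cast hω
        have hℓR : (5 : ℝ) ≤ (ℓ : ℝ) := by exact_mod_cast h5
        push_cast
        nlinarith
  -- lower bound
  have hlb : ∀ k ∈ {k | 0 < k ∧ ∃ x, IsLatticePt x ∧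
      x ∈ interior (dilate k (stablePolytope G))}, G.cliqueNum + 1 ≤ k := by
    rintro k ⟨hk, x, hlat, hx⟩
    rcases Nat.eq_zero_or_pos G.cliqueNum with hω | hω
    · omega
    obtain ⟨Q, hQ⟩ := G.exists_isNClique_cliqueNum
    have hQcard : Q.card = G.cliqueNum := hQ.card_eq
    obtain ⟨ε, hε, hball⟩ := Metric.isOpen_iff.mp isOpen_interior x hx
    have hball' : Metric.ball x ε ⊆ dilate k (stablePolytope G) :=
      hball.trans interior_subset
    have hkR : (0 : ℝ) < k := hk0 k hk
    -- every coordinate is at least 1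
    have hcoord : ∀ i, 1 ≤ x i := by
      intro i
      have hx' : Function.update x i (x i - ε / 2) ∈ dilate k (stablePolytope G) := by
        apply hball'
        rw [Metric.mem_ball, dist_pi_lt_iff hε]
        intro j
        rcases eq_or_ne j i with rfl | hne
        · rw [Function.update_self, Real.dist_eq]
          have heq : x j - ε / 2 - x j = -(ε / 2) := by ring
          rw [heq, abs_neg, abs_of_nonneg (by linarith)]
          linarith
        · simp [Function.update_of_ne hne, hε]
      obtain ⟨y, hyP, hxy⟩ := hx'
      rw [hG] at hyP
      have h0 : 0 ≤ y i := hyP.1 i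
      have : (k : ℝ) * y i = x i - ε / 2 := by
        have := congrFun hxy i
        simpa [Function.update_self] using this
      have hpos : 0 < x i := by nlinarith
      obtain ⟨m, hm⟩ := hlat i
      rw [hm] at hpos ⊢
      exact_mod_cast (by exact_mod_cast hpos : 0 < m)
    -- perturb upward on the clique
    have hup : (fun j => x j + ε / 2) ∈ dilate k (stablePolytope G) := by
      apply hball'
      rw [Metric.mem_ball, dist_pi_lt_iff hε]
      intro j
      simp [Real.dist_eq]
      rw [abs_of_nonneg (by linarith)]
      linarith
    obtain ⟨y, hyP, hxy⟩ := hup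
    rw [hG] at hyP
    have hsum : ∑ i ∈ Q, y i ≤ 1 := hyP.2.1 Q hQ.isClique
    have hxyQ : ∀ j, (k : ℝ) * y j = x j + ε / 2 := fun j => congrFun hxy j
    have hsum' : ∑ i ∈ Q, (x i + ε / 2) ≤ k := by
      calc ∑ i ∈ Q, (x i + ε / 2) = ∑ i ∈ Q, (k : ℝ) * y i := by
            exact Finset.sum_congr rfl fun i _ => (hxyQ i).symm
        _ = (k : ℝ) * ∑ i ∈ Q, y i := by rw [Finset.mul_sum]
        _ ≤ (k : ℝ) * 1 := by
            exact mul_le_mul_of_nonneg_left hsum hkR.le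
        _ = k := mul_one _
    have hge : (Q.card : ℝ) + Q.card * (ε / 2) ≤ k := by
      have h1 : ∑ i ∈ Q, (x i + ε / 2) = (∑ i ∈ Q, x i) + Q.card * (ε / 2) := by
        rw [Finset.sum_add_distrib, Finset.sum_const, nsmul_eq_mul]
      have h2 : (Q.card : ℝ) ≤ ∑ i ∈ Q, x i := by
        calc (Q.card : ℝ) = ∑ _i ∈ Q, (1 : ℝ) := by
              rw [Finset.sum_const, nsmul_eq_mul, mul_one]
          _ ≤ ∑ i ∈ Q, x i := Finset.sum_le_sum fun i _ => hcoord i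
      linarith
    have hQpos : 0 < Q.card := by omega
    have : (Q.card : ℝ) < k := by
      have : (0 : ℝ) < Q.card * (ε / 2) := by positivity
      linarith
    have : Q.card < k := by exact_mod_cast this
    omega
  exact le_antisymm (Nat.sInf_le hmem) (le_csInf ⟨_, hmem⟩ hlb)
end
end

section
/- For any graph G on n vertices, deg(P_G) ≥ n − χ(G), where deg(P_G) = n + 1 − codeg(P_G) is the degree of the stable set polytope. -/
open Finset
open Pointwise

noncomputable section

/-- Cube lemma: a point with coordinates in `[0,1]` supported on a finset `S`
lies in the convex hull of indicator vectors of subsets of `S`. -/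
theorem cube_lemma {ι : Type*} [DecidableEq ι] (S : Finset ι) (z : ι → ℝ)
    (h0 : ∀ i, 0 ≤ z i) (h1 : ∀ i, z i ≤ 1) (hs : ∀ i ∉ S, z i = 0) :
    z ∈ convexHull ℝ {x : ι → ℝ | ∃ T : Set ι, T ⊆ ↑S ∧
      x = T.indicator (fun _ => (1 : ℝ))} := by
  induction S using Finset.induction generalizing z with
  | empty =>
    have hz : z = (∅ : Set ι).indicator (fun _ => (1:ℝ)) := by
      funext i; simp [hs i (by simp)]
    exact subset_convexHull ℝ _ ⟨∅, by simp, hz⟩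
  | @insert a S ha ih =>
    classical
    set H : Set (ι → ℝ) := {x : ι → ℝ | ∃ T : Set ι, T ⊆ ↑S ∧
      x = T.indicator (fun _ => (1 : ℝ))} with hH
    set H' : Set (ι → ℝ) := {x : ι → ℝ | ∃ T : Set ι, T ⊆ ↑(insert a S) ∧
      x = T.indicator (fun _ => (1 : ℝ))} with hH'
    have hHsub : H ⊆ H' := by
      rintro x ⟨T, hT, rfl⟩
      exact ⟨T, hT.trans (by simp [Finset.coe_insert, Set.subset_insert]), rfl⟩
    set z0 : ι → ℝ := Function.update z a 0 with hz0
    have hz0mem : z0 ∈ convexHull ℝ H := by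
      apply ih
      · intro i; by_cases h : i = a <;> simp [hz0, h, h0 i]
      · intro i; by_cases h : i = a <;> simp [hz0, h, h1 i]
      · intro i hi
        by_cases h : i = a
        · simp [hz0, h]
        · simp only [hz0, Function.update_of_ne h]
          exact hs i (by simp [h, hi])
    set ea : ι → ℝ := ({a} : Set ι).indicator (fun _ => (1:ℝ)) with hea
    have hz1mem : z0 + ea ∈ convexHull ℝ H' := by
      have : z0 + ea ∈ convexHull ℝ H + convexHull ℝ {ea} := by
        exact Set.add_mem_add hz0mem (subset_convexHull ℝ _ rfl)
      rw [← convexHull_add] at this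
      refine convexHull_mono ?_ this
      rintro x ⟨x1, ⟨T, hT, rfl⟩, x2, rfl, rfl⟩
      refine ⟨T ∪ {a}, ?_, ?_⟩
      · rw [Finset.coe_insert]
        exact Set.union_subset (hT.trans (Set.subset_insert _ _)) (by simp)
      · have hdisj : Disjoint T ({a} : Set ι) := by
          rw [Set.disjoint_singleton_right]
          intro h; exact ha (hT h)
        rw [Set.indicator_union_of_disjoint hdisj]
        rfl
    have hz : z = z a • (z0 + ea) + (1 - z a) • z0 := by
      funext i
      by_cases h : i = a
      · subst h; simp [hz0, hea]
      · simp [hz0, hea, Function.update_of_ne h, Set.indicator_apply, h]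
        ring
    rw [hz]
    exact convex_convexHull ℝ H' hz1mem (convexHull_mono hHsub hz0mem)
      (h0 a) (by linarith [h1 a]) (by ring)

/-- `deg(P_G) ≥ n − χ(G)`, where `deg(P_G) = n + 1 − codeg(P_G)`. -/
theorem stmt15 {n : ℕ} (G : SimpleGraph (Fin n)) :
    n - G.chromaticNumber.toNat ≤ n + 1 - codeg (stablePolytope G) := by
  classical
  rcases Nat.eq_zero_or_pos n with hn | hn
  · omega
  set c := G.chromaticNumber.toNat with hc
  obtain ⟨C⟩ := G.colorable_chromaticNumber_of_fintype
  have hcpos : 0 < c := Fin.pos (C ⟨0, hn⟩)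
  have hc1 : (1 : ℝ) ≤ (c : ℝ) := by exact_mod_cast hcpos
  have hcp1 : (0 : ℝ) < (c : ℝ) + 1 := by linarith
  -- key: codeg ≤ c + 1
  have key : codeg (stablePolytope G) ≤ c + 1 := by
    apply Nat.sInf_le
    refine ⟨by omega, fun _ => (1 : ℝ), fun i => ⟨1, by norm_num⟩, ?_⟩
    set r : ℝ := ((c : ℝ) + 1)⁻¹ with hr
    have hrpos : 0 < r := by positivity
    rw [mem_interior]
    refine ⟨Metric.ball (fun _ => (1:ℝ)) r, ?_, Metric.isOpen_ball,
      Metric.mem_ball_self hrpos⟩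
    intro y hy
    have hyc : ∀ i, |y i - 1| < r := by
      intro i
      have := (dist_pi_lt_iff hrpos).mp hy i
      rwa [Real.dist_eq] at this
    have hylb : ∀ i, (0:ℝ) < y i := by
      intro i
      have h1 := abs_lt.mp (hyc i)
      have : r ≤ 1 := by
        rw [hr]; rw [inv_le_one_iff₀]; right; linarith
      linarith [h1.1]
    have hyub : ∀ i, (c : ℝ) * y i ≤ (c : ℝ) + 1 := by
      intro i
      have h1 := abs_lt.mp (hyc i)
      have h2 : y i < 1 + r := by linarith [h1.2]
      have h3 : (c : ℝ) * r < 1 := by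
        rw [hr]
        rw [mul_inv_lt_iff₀ hcp1]
        linarith
      nlinarith
    -- the scaled point
    set w : Fin n → ℝ := fun i => y i / ((c : ℝ) + 1) with hw
    have hwP : w ∈ stablePolytope G := by
      set z : Fin c → Fin n → ℝ :=
        fun j i => if C i = j then (c : ℝ) * w i else 0 with hz
      have hsum : w = ∑ j : Fin c, ((c : ℝ))⁻¹ • z j := by
        funext i
        rw [Finset.sum_apply]
        simp only [hz, Pi.smul_apply, smul_eq_mul, mul_ite, mul_zero]
        rw [Finset.sum_ite_eq Finset.univ (C i) (fun _ => (c:ℝ)⁻¹ * ((c:ℝ) * w i))]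
        simp only [Finset.mem_univ, if_true]
        field_simp
      rw [hsum]
      apply Convex.sum_mem (convex_convexHull ℝ _)
      · intro j _; positivity
      · simp [Finset.sum_const]
        field_simp
      · intro j _
        -- z j lies in the stable set polytope via the cube lemma
        have hmem := cube_lemma (Finset.univ.filter (fun i => C i = j)) (z j)
          (fun i => by
            by_cases h : C i = j
            · simp only [hz, h, if_true]
              have := hylb i
              positivity
            · simp [hz, h])
          (fun i => by
            by_cases h : C i = j
            · simp only [hz, h, if_true]
              have h2 := hyub i
              show (c:ℝ) * (y i / ((c:ℝ)+1)) ≤ 1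
              rw [← mul_div_assoc, div_le_one hcp1]
              exact h2
            · simp [hz, h])
          (fun i hi => by
            simp only [Finset.mem_filter, Finset.mem_univ, true_and] at hi
            simp [hz, hi])
        refine convexHull_mono ?_ hmem
        rintro x ⟨T, hT, rfl⟩
        refine ⟨T, ?_, rfl⟩
        intro u hu v hv hadj
        have hu' := hT hu
        have hv' := hT hv
        simp only [Finset.coe_filter, Set.mem_setOf_eq, Finset.mem_univ,
          true_and] at hu' hv'
        exact C.valid hadj (hu'.trans hv'.symm)
    refine ⟨w, hwP, ?_⟩
    funext i
    simp only [hw, Pi.smul_apply, smul_eq_mul]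
    push_cast
    field_simp
  omega

end
end
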